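/- Let (X, τ) be a compact T_4 space (compact, normal and Hausdorff). If there exists a Baire one function on (X, τ) that is not continuous, then B_1(X, τ) contains a free maximal ideal. -/

import Mathlib

open Filter Topology

/-- The ring of Baire one (pointwise limits of sequences of continuous) real-valued
functions on a topological space, as a subring of `X → ℝ`. -/
def baireOne (X : Type*) [TopologicalSpace X] : Subring (X → ℝ) where
  carrier := {f | ∃ F : ℕ → C(X, ℝ), ∀ x, Tendsto (fun n => F n x) atTop (𝓝 (f x))}
  zero_mem' := ⟨fun _ => 0, fun x => by simpa using tendsto_const_nhds⟩
  one_mem' := ⟨fun _ => 1, fun x => by simpa using tendsto_const_nhds⟩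
  add_mem' := by
    rintro f g ⟨F, hF⟩ ⟨G, hG⟩
    exact ⟨fun n => F n + G n, fun x => by simpa using (hF x).add (hG x)⟩
  mul_mem' := by
    rintro f g ⟨F, hF⟩ ⟨G, hG⟩
    exact ⟨fun n => F n * G n, fun x => by simpa using (hF x).mul (hG x)⟩
  neg_mem' := by
    rintro f ⟨F, hF⟩
    exact ⟨fun n => -F n, fun x => by simpa using (hF x).neg⟩

/-!
If `f` is discontinuous at `p`, then for some `ε > 0` the set `S = {x | ε ≤ |f x - f p|}`
accumulates at `p`, and the Baire one function `ε - min (|f - f p|) ε` vanishes on `S` but not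
at `p`. The functions vanishing on `S` near `p` (the kernel of the germ map along `𝓝[S] p`) form a
proper ideal. It contains that function and, by complete regularity, for every `x ≠ p` a continuous
function vanishing near `p` but not at `x`; so every maximal ideal containing it is free.
-/

namespace Subring

variable {X R : Type*} [CommRing R] (S : Subring (X → R)) (l : Filter X)

def eventuallyZeroIdeal : Ideal S :=
  RingHom.ker ((Germ.coeRingHom l).comp S.subtype)

variable {S l}

lemma mem_eventuallyZeroIdeal {h : S} : h ∈ S.eventuallyZeroIdeal l ↔ (h : X → R) =ᶠ[l] 0 :=
  Germ.coe_eq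

lemma eventuallyZeroIdeal_ne_top [Nontrivial R] [l.NeBot] : S.eventuallyZeroIdeal l ≠ ⊤ :=
  RingHom.ker_ne_top _

end Subring

section BaireOne

variable {X : Type*} [TopologicalSpace X]

lemma continuous_mem_baireOne {u : X → ℝ} (hu : Continuous u) : u ∈ baireOne X :=
  ⟨fun _ => ⟨u, hu⟩, fun _ => tendsto_const_nhds⟩

lemma Continuous.comp_mem_baireOne {φ : ℝ → ℝ} (hφ : Continuous φ) {f : X → ℝ}
    (hf : f ∈ baireOne X) : φ ∘ f ∈ baireOne X := by
  obtain ⟨F, hF⟩ := hf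
  exact ⟨fun n => ⟨φ ∘ F n, hφ.comp (F n).continuous⟩,
    fun x => hφ.continuousAt.tendsto.comp (hF x)⟩

lemma exists_baireOne_ne_zero_eqOn_zero_of_not_continuousAt {f : X → ℝ} (hf : f ∈ baireOne X)
    {p : X} (hfp : ¬ContinuousAt f p) :
    ∃ g ∈ baireOne X, g p ≠ 0 ∧ ∃ S : Set X, p ∈ closure S ∧ Set.EqOn g 0 S := by
  obtain ⟨ε, hε, hfreq⟩ : ∃ ε > 0, ∃ᶠ x in 𝓝 p, ε ≤ dist (f x) (f p) := by
    simpa [ContinuousAt, Metric.tendsto_nhds] using hfp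
  have hφ : Continuous fun t => ε - min (dist t (f p)) ε := by fun_prop
  refine ⟨_ ∘ f, hφ.comp_mem_baireOne hf, by simp [hε.le, hε.ne'], {x | ε ≤ dist (f x) (f p)},
    mem_closure_iff_frequently.mpr hfreq,
    fun x (hx : ε ≤ dist (f x) (f p)) => by simp [min_eq_right hx]⟩

end BaireOne

lemma exists_continuous_eventuallyEq_zero_ne_zero {X : Type*} [TopologicalSpace X] [T35Space X]
    {p x : X} (hxp : x ≠ p) : ∃ k : C(X, ℝ), k =ᶠ[𝓝 p] 0 ∧ k x ≠ 0 := by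
  obtain ⟨U, V, hU, hV, hpU, hxV, hUV⟩ := t2_separation hxp.symm
  obtain ⟨f, hf, hfx, hf1⟩ := CompletelyRegularSpace.completely_regular_isOpen x V hV hxV
  refine ⟨⟨fun y => 1 - f y, by fun_prop⟩, ?_, by simp [hfx]⟩
  filter_upwards [hU.mem_nhds hpU] with y hy
  simp [hf1 (hUV.subset_compl_right hy)]

theorem exists_free_maximal_of_noncontinuous_baireOne_general
    (X : Type*) [TopologicalSpace X] [T4Space X]
    (h : ∃ f ∈ baireOne X, ¬Continuous f) :
    ∃ M : Ideal ↥(baireOne X), M.IsMaximal ∧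
      (⋂ f ∈ (M : Set ↥(baireOne X)), {x : X | (f : X → ℝ) x = 0}) = ∅ := by
  obtain ⟨f, hf, hfc⟩ := h
  obtain ⟨p, hfp⟩ : ∃ p, ¬ContinuousAt f p := by simpa [continuous_iff_continuousAt] using hfc
  obtain ⟨g, hg, hgp, S, hpS, hgS⟩ := exists_baireOne_ne_zero_eqOn_zero_of_not_continuousAt hf hfp
  have := mem_closure_iff_nhdsWithin_neBot.mp hpS
  set I := (baireOne X).eventuallyZeroIdeal (𝓝[S] p)
  have hI : ∀ x, ∃ u ∈ I, (u : X → ℝ) x ≠ 0 := by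
    intro x
    rcases eq_or_ne x p with rfl | hxp
    · exact ⟨⟨g, hg⟩, Subring.mem_eventuallyZeroIdeal.mpr
        (eventually_nhdsWithin_of_forall hgS), hgp⟩
    · obtain ⟨k, hk, hkx⟩ := exists_continuous_eventuallyEq_zero_ne_zero hxp
      exact ⟨⟨k, continuous_mem_baireOne k.continuous⟩, Subring.mem_eventuallyZeroIdeal.mpr
        (hk.filter_mono nhdsWithin_le_nhds), hkx⟩
  obtain ⟨M, hM, hIM⟩ := Ideal.exists_le_maximal I Subring.eventuallyZeroIdeal_ne_top
  refine ⟨M, hM, Set.eq_empty_of_forall_notMem fun x hx => ?_⟩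
  obtain ⟨u, huI, hux⟩ := hI x
  exact hux (Set.mem_iInter₂.mp hx u (hIM huI))

/-- If `(X, τ)` is a compact `T₄` space admitting a non-continuous Baire one function,
then `B₁(X, τ)` contains a free maximal ideal. -/
theorem exists_free_maximal_of_noncontinuous_baireOne
    (X : Type*) [TopologicalSpace X] [CompactSpace X] [T4Space X]
    (h : ∃ f ∈ baireOne X, ¬Continuous f) :
    ∃ M : Ideal ↥(baireOne X), M.IsMaximal ∧
      (⋂ f ∈ (M : Set ↥(baireOne X)), {x : X | (f : X → ℝ) x = 0}) = ∅ :=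
  exists_free_maximal_of_noncontinuous_baireOne_general X h
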